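/- Let A, B be Hermitian positive definite and let C be the 2n×2n block matrix with blocks [[0, B],[A^{-1}, 0]]. Then sign(C) = [[0, A#B],[(A#B)^{-1}, 0]], where sign(C) = C (C^2)^{-1/2}. -/

import Mathlib

open Matrix ComplexOrder

/-- The positive semidefinite square root of a positive semidefinite matrix (as defined in
the older Mathlib, where it was `Matrix.PosSemidef.sqrt`). -/
noncomputable def Matrix.PosSemidef.sqrt {n : Type*} [Fintype n] [DecidableEq n]
    {A : Matrix n n ℂ} (hA : A.PosSemidef) : Matrix n n ℂ :=
  hA.isHermitian.eigenvectorUnitary.1 * diagonal ((↑) ∘ (√·) ∘ hA.isHermitian.eigenvalues) *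
    (star hA.isHermitian.eigenvectorUnitary : Matrix n n ℂ)

lemma Matrix.PosSemidef.posSemidef_sqrt {n : Type*} [Fintype n] [DecidableEq n]
    {A : Matrix n n ℂ} (hA : A.PosSemidef) : hA.sqrt.PosSemidef := by
  unfold Matrix.PosSemidef.sqrt
  have := (posSemidef_diagonal_iff.mpr (fun i => (by
    simp only [Function.comp_apply]; exact_mod_cast Real.sqrt_nonneg _) :
      ∀ i, (0 : ℂ) ≤ ((↑) ∘ (√·) ∘ hA.isHermitian.eigenvalues) i)).mul_mul_conjTranspose_same
    (hA.isHermitian.eigenvectorUnitary.1)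
  simpa [Matrix.star_eq_conjTranspose] using this

lemma geomMean_aux {n : ℕ} {A B : Matrix (Fin n) (Fin n) ℂ} (hA : A.PosDef) (hB : B.PosDef) :
    ((hA.posSemidef.sqrt)⁻¹ * B * (hA.posSemidef.sqrt)⁻¹).PosSemidef := by
  have h := hB.posSemidef.conjTranspose_mul_mul_same (hA.posSemidef.sqrt)⁻¹
  rwa [(hA.posSemidef.posSemidef_sqrt.isHermitian.inv).eq] at h

/-- The geometric mean `A # B = A^{1/2} (A^{-1/2} B A^{-1/2})^{1/2} A^{1/2}` of two
Hermitian positive definite matrices. -/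
noncomputable def geomMean {n : ℕ} {A B : Matrix (Fin n) (Fin n) ℂ}
    (hA : A.PosDef) (hB : B.PosDef) : Matrix (Fin n) (Fin n) ℂ :=
  hA.posSemidef.sqrt * (geomMean_aux hA hB).sqrt * hA.posSemidef.sqrt

/-! With `G = A # B` one has the Riccati identity `G A⁻¹ G = B`, so `Y₀ = diag(G A⁻¹, A⁻¹ G)`
squares to `C² = diag(B A⁻¹, A⁻¹ B)`. Both blocks of `Y₀` are products of two positive definite
matrices and so have positive spectrum, and a square root with spectrum in the open right
half-plane is unique: if `Y² = Z²` then `Y (Y - Z) = (Y - Z) (-Z)`, and a Sylvester equation whose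
coefficients have disjoint spectra has only the zero solution. Hence `Y = Y₀`, and
`C = [[0, G], [G⁻¹, 0]] Y₀` gives the sign. -/

open Polynomial in
lemma SemiconjBy.aeval {R A : Type*} [CommSemiring R] [Semiring A] [Algebra R A] {a x y : A}
    (h : SemiconjBy a x y) (p : R[X]) : SemiconjBy a (aeval x p) (aeval y p) := by
  induction p using Polynomial.induction_on' with
  | add p q hp hq => simpa only [map_add] using hp.add_right hq
  | monomial k c =>
    simpa only [aeval_monomial] using
      SemiconjBy.mul_right (Algebra.commute_algebraMap_right c a) (h.pow_right k)

namespace Matrix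

variable {m : Type*} [Fintype m] [DecidableEq m]

lemma PosSemidef.sqrt_mul_self {A : Matrix m m ℂ} (hA : A.PosSemidef) :
    hA.sqrt * hA.sqrt = A := by
  set U := (hA.isHermitian.eigenvectorUnitary : Matrix m m ℂ)
  have hU : star U * U = 1 := (mem_unitaryGroup_iff').mp hA.isHermitian.eigenvectorUnitary.2
  have hsq : (fun i => ((↑) ∘ (√·) ∘ hA.isHermitian.eigenvalues) i *
      ((↑) ∘ (√·) ∘ hA.isHermitian.eigenvalues) i) =
      ((↑) ∘ hA.isHermitian.eigenvalues : m → ℂ) := by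
    funext i
    simp only [Function.comp_apply]
    exact_mod_cast Real.mul_self_sqrt (hA.eigenvalues_nonneg i)
  simp only [sqrt, Matrix.mul_assoc]
  rw [← Matrix.mul_assoc (star U) U, hU, Matrix.one_mul, ← Matrix.mul_assoc (diagonal _),
    diagonal_mul_diagonal, hsq]
  conv_rhs => rw [hA.isHermitian.spectral_theorem, Unitary.conjStarAlgAut_apply]
  rw [Matrix.mul_assoc]
  rfl

lemma PosDef.isUnit_sqrt {A : Matrix m m ℂ} (hA : A.PosDef) : IsUnit hA.posSemidef.sqrt :=
  isUnit_of_mul_isUnit_left (hA.posSemidef.sqrt_mul_self ▸ hA.isUnit)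

lemma PosDef.re_pos_of_mem_spectrum_mul {P Q : Matrix m m ℂ} (hP : P.PosDef) (hQ : Q.PosDef)
    {z : ℂ} (hz : z ∈ spectrum ℂ (P * Q)) : 0 < z.re := by
  set S := hP.posSemidef.sqrt
  have hz0 : z ≠ 0 := by
    rintro rfl
    exact (spectrum.zero_notMem_iff ℂ).mpr (hP.isUnit.mul hQ.isUnit) hz
  have hSQS : z ∈ spectrum ℂ (S * Q * S) \ {0} := by
    rw [← spectrum.nonzero_mul_comm, ← Matrix.mul_assoc, hP.posSemidef.sqrt_mul_self]
    exact ⟨hz, hz0⟩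
  have hpsd : (S * Q * S).PosSemidef := by
    have h := hQ.posSemidef.conjTranspose_mul_mul_same S
    rwa [hP.posSemidef.posSemidef_sqrt.isHermitian.eq] at h
  have hnonneg : 0 ≤ z := (posSemidef_iff_isHermitian_and_spectrum_nonneg.mp hpsd).2 hSQS.1
  exact (Complex.pos_iff.mp (lt_of_le_of_ne hnonneg (Ne.symm hz0))).1

lemma spectrum_fromBlocks_zero {n R : Type*} [Fintype n] [DecidableEq n] [CommRing R]
    (D₁ : Matrix m m R) (D₂ : Matrix n n R) :
    spectrum R (fromBlocks D₁ 0 0 D₂) = spectrum R D₁ ∪ spectrum R D₂ := by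
  ext z
  have hblock : algebraMap R _ z - fromBlocks D₁ 0 0 D₂ =
      fromBlocks (algebraMap R _ z - D₁) 0 0 (algebraMap R (Matrix n n R) z - D₂) := by
    ext (i | i) (j | j) <;> simp [algebraMap_matrix_apply]
  simp only [spectrum.mem_iff, Set.mem_union, hblock, isUnit_iff_isUnit_det (fromBlocks _ _ _ _),
    det_fromBlocks_zero₂₁, IsUnit.mul_iff, isUnit_iff_isUnit_det (_ - _), not_and_or]

lemma eq_zero_of_mul_eq_mul_of_disjoint_spectrum {K : Type*} [Field K] [IsAlgClosed K]
    {Y W X : Matrix m m K} (hYW : Disjoint (spectrum K Y) (spectrum K W)) (h : Y * X = X * W) :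
    X = 0 := by
  cases isEmpty_or_nonempty m
  · exact Subsingleton.elim _ _
  have hdeg : 0 < W.charpoly.degree := by
    rw [charpoly_degree_eq_dim]
    exact_mod_cast Fintype.card_pos
  have hunit : IsUnit (Polynomial.aeval Y W.charpoly) := by
    rw [← spectrum.zero_notMem_iff K, spectrum.map_polynomial_aeval_of_degree_pos _ _ hdeg]
    rintro ⟨μ, hμY, hμW⟩
    exact hYW.notMem_of_mem_left hμY (mem_spectrum_iff_isRoot_charpoly.mpr hμW)
  have hCH : Polynomial.aeval Y W.charpoly * X = 0 := by
    rw [← (SemiconjBy.aeval h.symm W.charpoly).eq, aeval_self_charpoly, mul_zero]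
  simpa [hunit.mul_right_eq_zero] using hCH

lemma eq_of_sq_eq_sq_of_re_pos {Y Z : Matrix m m ℂ} (h : Y ^ 2 = Z ^ 2)
    (hY : ∀ z ∈ spectrum ℂ Y, 0 < z.re) (hZ : ∀ z ∈ spectrum ℂ Z, 0 < z.re) : Y = Z := by
  have hdisj : Disjoint (spectrum ℂ Y) (spectrum ℂ (-Z)) := by
    refine Set.disjoint_left.mpr fun z hzY hzZ => ?_
    rw [← spectrum.neg_eq] at hzZ
    linarith [hY z hzY, Complex.neg_re z ▸ hZ (-z) hzZ]
  have hsylv : Y * (Y - Z) = (Y - Z) * -Z := by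
    linear_combination (norm := noncomm_ring) h
  exact sub_eq_zero.mp (eq_zero_of_mul_eq_mul_of_disjoint_spectrum hdisj hsylv)

end Matrix

section GeomMean

variable {n : ℕ} {A B : Matrix (Fin n) (Fin n) ℂ}

lemma geomMean_mul_inv_mul_geomMean (hA : A.PosDef) (hB : B.PosDef) :
    geomMean hA hB * A⁻¹ * geomMean hA hB = B := by
  have : Invertible hA.posSemidef.sqrt := hA.isUnit_sqrt.invertible
  have hAinv : A⁻¹ = hA.posSemidef.sqrt⁻¹ * hA.posSemidef.sqrt⁻¹ := by
    rw [← Matrix.mul_inv_rev, hA.posSemidef.sqrt_mul_self]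
  calc geomMean hA hB * A⁻¹ * geomMean hA hB
      = hA.posSemidef.sqrt * ((geomMean_aux hA hB).sqrt * (geomMean_aux hA hB).sqrt) *
          hA.posSemidef.sqrt := by
        simp [geomMean, hAinv, Matrix.mul_assoc]
    _ = B := by
        rw [PosSemidef.sqrt_mul_self]
        simp [Matrix.mul_assoc]

lemma posDef_geomMean (hA : A.PosDef) (hB : B.PosDef) : (geomMean hA hB).PosDef := by
  have hpsd : (geomMean hA hB).PosSemidef := by
    have h := (geomMean_aux hA hB).posSemidef_sqrt.conjTranspose_mul_mul_same hA.posSemidef.sqrt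
    rwa [hA.posSemidef.posSemidef_sqrt.isHermitian.eq] at h
  refine hpsd.posDef_iff_isUnit.mpr (isUnit_of_mul_isUnit_left (y := A⁻¹ * geomMean hA hB) ?_)
  rw [← Matrix.mul_assoc, geomMean_mul_inv_mul_geomMean]
  exact hB.isUnit

end GeomMean

/-- `sign([[0, B],[A⁻¹, 0]]) = [[0, A#B],[(A#B)⁻¹, 0]]`, where the sign of `C` is
`C * Y⁻¹` for `Y` the principal square root of `C ^ 2`. -/
theorem sign_block_eq_geomMean {n : ℕ} {A B : Matrix (Fin n) (Fin n) ℂ}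
    (hA : A.PosDef) (hB : B.PosDef)
    (C : Matrix (Fin n ⊕ Fin n) (Fin n ⊕ Fin n) ℂ)
    (hC : C = Matrix.fromBlocks 0 B A⁻¹ 0) :
    ∀ Y : Matrix (Fin n ⊕ Fin n) (Fin n ⊕ Fin n) ℂ,
      Y ^ 2 = C ^ 2 → (∀ z ∈ spectrum ℂ Y, 0 < z.re) →
      C * Y⁻¹ = Matrix.fromBlocks 0 (geomMean hA hB) ((geomMean hA hB)⁻¹) 0 := by
  intro Y hY hYre
  set G := geomMean hA hB
  have hG : G.PosDef := posDef_geomMean hA hB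
  have hGAG : G * A⁻¹ * G = B := geomMean_mul_inv_mul_geomMean hA hB
  have hY₀ : Y = fromBlocks (G * A⁻¹) 0 0 (A⁻¹ * G) := by
    refine eq_of_sq_eq_sq_of_re_pos ?_ hYre fun z hz => ?_
    · rw [hY, hC, sq, sq, fromBlocks_multiply, fromBlocks_multiply]
      simp [← hGAG, Matrix.mul_assoc]
    · rw [spectrum_fromBlocks_zero] at hz
      rcases hz with hz | hz
      · exact hG.re_pos_of_mem_spectrum_mul hA.inv hz
      · exact hA.inv.re_pos_of_mem_spectrum_mul hG hz
  have hYunit : IsUnit Y :=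
    (spectrum.zero_notMem_iff ℂ).mp fun h0 => (hYre 0 h0).false
  have : Invertible G := hG.isUnit.invertible
  have hCY : C = fromBlocks 0 G G⁻¹ 0 * Y := by
    rw [hC, hY₀, fromBlocks_multiply]
    simp [← hGAG, Matrix.mul_assoc]
  rw [hCY, Matrix.mul_assoc, Matrix.mul_nonsing_inv _ ((isUnit_iff_isUnit_det Y).mp hYunit),
    Matrix.mul_one]
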